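/- Let (x_t) be a sequence of random variables such that conditionally on the past, x_{t+1} is Gaussian with mean bounded by c₁ and variance bounded by c₂ (both uniformly in t and the past). Then for every p ∈ ℕ, sup_{t≥1} E[|x_t|ᵖ] ≤ E[(c₁ + |W|)ᵖ] where W ~ N(0, c₂), independent of the initial condition x₀. -/

import Mathlib

/-!
Integrating the conditional-law hypothesis against indicators shows that the law of `x (t + 1)`
is the mixture `κ ∘ₘ P` of the Gaussians `N(μ_t ω, v_t ω)`. Each of them is the law of
`μ + √v Z` with `Z ~ N(0, 1)`, and `|μ + √v Z| ≤ c₁ + √c₂ |Z|`, so its moments of `|·|` are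
dominated by those of `c₁ + |W|`, `W ~ N(0, c₂)`; averaging over `ω` gives the bound.
-/

open MeasureTheory ProbabilityTheory
open scoped ENNReal NNReal

noncomputable def gaussianRealKernel : Kernel (ℝ × ℝ≥0) ℝ :=
  ⟨gaussianReal.uncurry, measurable_gaussianReal⟩

instance : IsMarkovKernel gaussianRealKernel :=
  ⟨fun q => inferInstanceAs (IsProbabilityMeasure (gaussianReal q.1 q.2))⟩

section GaussianComparison

variable {g : ℝ → ℝ≥0∞}

lemma lintegral_gaussianReal_le_shift (hg : ∀ x y, |x| ≤ |y| → g x ≤ g y)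
    {μ c : ℝ} (hμ : |μ| ≤ c) (v : ℝ≥0) :
    ∫⁻ y, g y ∂gaussianReal μ v ≤ ∫⁻ y, g (c + |y|) ∂gaussianReal 0 v := by
  have hshift : gaussianReal μ v = (gaussianReal 0 v).map (· + μ) := by
    rw [gaussianReal_map_add_const, zero_add]
  rw [hshift]
  refine (lintegral_map_le _ _).trans (lintegral_mono fun y => hg _ _ ?_)
  calc |y + μ| ≤ |y| + |μ| := abs_add_le _ _
    _ ≤ c + |y| := by linarith
    _ ≤ |(c + |y|)| := le_abs_self _

lemma lintegral_gaussianReal_zero_mono_var (hg : ∀ x y, |x| ≤ |y| → g x ≤ g y)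
    {v w : ℝ≥0} (hvw : v ≤ w) :
    ∫⁻ y, g y ∂gaussianReal 0 v ≤ ∫⁻ y, g y ∂gaussianReal 0 w := by
  rcases eq_or_ne w 0 with rfl | hw
  · rw [nonpos_iff_eq_zero.mp hvw]
  set a : ℝ := (NNReal.sqrt (v / w) : ℝ) with ha
  have ha_nonneg : 0 ≤ a := NNReal.coe_nonneg _
  have ha_le_one : a ≤ 1 := by
    rw [ha, NNReal.coe_le_one, NNReal.sqrt_le_one, div_le_one₀ (pos_iff_ne_zero.mpr hw)]
    exact hvw
  have hscale : gaussianReal 0 v = (gaussianReal 0 w).map (a * ·) := by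
    rw [gaussianReal_map_const_mul, mul_zero]
    congr 1
    ext
    simp only [ha, NNReal.coe_mk, NNReal.coe_mul]
    rw [← NNReal.coe_pow, NNReal.sq_sqrt, ← NNReal.coe_mul, div_mul_cancel₀ _ hw]
  rw [hscale]
  refine (lintegral_map_le _ _).trans (lintegral_mono fun y => hg _ _ ?_)
  rw [abs_mul, abs_of_nonneg ha_nonneg]
  exact mul_le_of_le_one_left (abs_nonneg y) ha_le_one

end GaussianComparison

lemma lintegral_abs_pow_gaussianReal_le {μ c : ℝ} {v w : ℝ≥0} (hμ : |μ| ≤ c) (hvw : v ≤ w)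
    (p : ℕ) :
    ∫⁻ y, ENNReal.ofReal (|y| ^ p) ∂gaussianReal μ v
      ≤ ∫⁻ y, ENNReal.ofReal ((c + |y|) ^ p) ∂gaussianReal 0 w := by
  have hc : 0 ≤ c := (abs_nonneg μ).trans hμ
  calc ∫⁻ y, ENNReal.ofReal (|y| ^ p) ∂gaussianReal μ v
      ≤ ∫⁻ y, ENNReal.ofReal (|(c + |y|)| ^ p) ∂gaussianReal 0 v :=
        lintegral_gaussianReal_le_shift (fun x y h => by gcongr) hμ v
    _ = ∫⁻ y, ENNReal.ofReal ((c + |y|) ^ p) ∂gaussianReal 0 v := by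
        simp only [abs_of_nonneg (add_nonneg hc (abs_nonneg _))]
    _ ≤ ∫⁻ y, ENNReal.ofReal ((c + |y|) ^ p) ∂gaussianReal 0 w :=
        lintegral_gaussianReal_zero_mono_var (fun x y h => by gcongr) hvw

lemma map_eq_comp_of_condExp_indicator {Ω β : Type*} {m m0 : MeasurableSpace Ω}
    [MeasurableSpace β] {P : Measure Ω} [IsFiniteMeasure P] (hm : m ≤ m0) {X : Ω → β}
    (hX : Measurable X) {κ : Kernel Ω β} [IsFiniteKernel κ]
    (hcond : ∀ s : Set β, MeasurableSet s →
      (fun ω => (κ ω s).toReal) =ᵐ[P] P[fun ω => s.indicator (fun _ => (1 : ℝ)) (X ω)|m]) :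
    P.map X = κ ∘ₘ P := by
  ext s hs
  rw [← ENNReal.toReal_eq_toReal_iff' (measure_ne_top _ _) (measure_ne_top _ _)]
  calc (P.map X s).toReal
      = ∫ y, s.indicator 1 y ∂P.map X := (integral_indicator_one hs).symm
    _ = ∫ ω, s.indicator (fun _ => (1 : ℝ)) (X ω) ∂P :=
        integral_map hX.aemeasurable (stronglyMeasurable_const.indicator hs).aestronglyMeasurable
    _ = ∫ ω, P[fun ω => s.indicator (fun _ => (1 : ℝ)) (X ω)|m] ω ∂P :=
        (integral_condExp hm).symm
    _ = ∫ ω, (κ ω s).toReal ∂P := integral_congr_ae (hcond s hs).symm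
    _ = ((κ ∘ₘ P) s).toReal := by
        rw [integral_toReal (κ.measurable_coe hs).aemeasurable
          (ae_of_all _ fun _ => measure_lt_top _ _), Measure.bind_apply hs κ.aemeasurable]

theorem cond_gaussian_sequence_p_bounded_general {Ω : Type*} {m0 : MeasurableSpace Ω}
    (P : Measure Ω) [IsProbabilityMeasure P]
    (ℱ : ℕ → MeasurableSpace Ω) (hℱ : ∀ t, ℱ t ≤ m0)
    (x : ℕ → Ω → ℝ) (hadapted : ∀ t, Measurable[ℱ t] (x t))
    (μf : ℕ → Ω → ℝ) (vf : ℕ → Ω → NNReal)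
    (hμmeas : ∀ t, Measurable[ℱ t] (μf t)) (hvmeas : ∀ t, Measurable[ℱ t] (vf t))
    (c₁ : ℝ) (c₂ : NNReal)
    (hμb : ∀ t, ∀ᵐ ω ∂P, |μf t ω| ≤ c₁) (hvb : ∀ t, ∀ᵐ ω ∂P, vf t ω ≤ c₂)
    (hcond : ∀ t, ∀ s : Set ℝ, MeasurableSet s →
      (fun ω => ((gaussianReal (μf t ω) (vf t ω)) s).toReal)
        =ᵐ[P] P[fun ω => s.indicator (fun _ => (1 : ℝ)) (x (t + 1) ω)|ℱ t])
    (p : ℕ) :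
    ∀ t, 1 ≤ t →
      (∫⁻ ω, ENNReal.ofReal (|x t ω| ^ p) ∂P)
        ≤ ∫⁻ y, ENNReal.ofReal ((c₁ + |y|) ^ p) ∂(gaussianReal 0 c₂) := by
  intro t ht
  obtain ⟨n, rfl⟩ := Nat.exists_eq_add_of_le' ht
  have hX : Measurable (x (n + 1)) := (hadapted (n + 1)).mono (hℱ (n + 1)) le_rfl
  let κ : Kernel Ω ℝ := gaussianRealKernel.comap (fun ω => (μf n ω, vf n ω))
    (((hμmeas n).mono (hℱ n) le_rfl).prodMk ((hvmeas n).mono (hℱ n) le_rfl))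
  have hlaw : P.map (x (n + 1)) = κ ∘ₘ P := map_eq_comp_of_condExp_indicator (hℱ n) hX (hcond n)
  have hmoment : Measurable fun y : ℝ => ENNReal.ofReal (|y| ^ p) := by fun_prop
  calc ∫⁻ ω, ENNReal.ofReal (|x (n + 1) ω| ^ p) ∂P
      = ∫⁻ ω, ∫⁻ y, ENNReal.ofReal (|y| ^ p) ∂κ ω ∂P := by
        rw [← lintegral_map hmoment hX, hlaw,
          Measure.lintegral_bind κ.aemeasurable hmoment.aemeasurable]
    _ ≤ ∫⁻ _, ∫⁻ y, ENNReal.ofReal ((c₁ + |y|) ^ p) ∂gaussianReal 0 c₂ ∂P := by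
        refine lintegral_mono_ae ?_
        filter_upwards [hμb n, hvb n] with ω hμ hv
        exact lintegral_abs_pow_gaussianReal_le hμ hv p
    _ = _ := by rw [lintegral_const, measure_univ, mul_one]

/-- p-boundedness of conditionally Gaussian sequences: if, conditionally on
the past (a filtration `ℱ`), `x_{t+1}` is Gaussian with mean bounded by `c₁`
and variance bounded by `c₂` (uniformly in `t` and the past), then for every
`p ∈ ℕ`, `sup_{t ≥ 1} E[|x_t|ᵖ] ≤ E[(c₁ + |W|)ᵖ]` with `W ~ N(0, c₂)`,
independently of the initial condition `x₀`. -/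
theorem cond_gaussian_sequence_p_bounded {Ω : Type*} {m0 : MeasurableSpace Ω}
    (P : Measure Ω) [IsProbabilityMeasure P]
    (ℱ : ℕ → MeasurableSpace Ω) (hℱ : ∀ t, ℱ t ≤ m0)
    (hmono : Monotone ℱ)
    (x : ℕ → Ω → ℝ) (hadapted : ∀ t, Measurable[ℱ t] (x t))
    (μf : ℕ → Ω → ℝ) (vf : ℕ → Ω → NNReal)
    (hμmeas : ∀ t, Measurable[ℱ t] (μf t)) (hvmeas : ∀ t, Measurable[ℱ t] (vf t))
    (c₁ : ℝ) (c₂ : NNReal) (hc₁ : 0 ≤ c₁)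
    (hμb : ∀ t, ∀ᵐ ω ∂P, |μf t ω| ≤ c₁) (hvb : ∀ t, ∀ᵐ ω ∂P, vf t ω ≤ c₂)
    (hcond : ∀ t, ∀ s : Set ℝ, MeasurableSet s →
      (fun ω => ((gaussianReal (μf t ω) (vf t ω)) s).toReal)
        =ᵐ[P] P[fun ω => s.indicator (fun _ => (1 : ℝ)) (x (t + 1) ω)|ℱ t])
    (p : ℕ) :
    ∀ t, 1 ≤ t →
      (∫⁻ ω, ENNReal.ofReal (|x t ω| ^ p) ∂P)
        ≤ ∫⁻ y, ENNReal.ofReal ((c₁ + |y|) ^ p) ∂(gaussianReal 0 c₂) :=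
  cond_gaussian_sequence_p_bounded_general P ℱ hℱ x hadapted μf vf hμmeas hvmeas c₁ c₂ hμb hvb hcond
    p
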